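/- For every k ∈ ℕ and every n ≥ 1 there exist vectors x_1,…,x_n ∈ c00 such that, setting x = Σ_{i=1}^n x_i: (1) ‖x_i‖_k = 1/2 for i = 1,…,n; (2) ‖x‖_k ≤ 1; (3) ‖x‖_{k+1} ≥ n/4. -/

import Mathlib

/-- The ℓ¹-norm on `c00 = ℕ →₀ ℝ`. -/
noncomputable def l1 (x : ℕ →₀ ℝ) : ℝ := ∑ n ∈ x.support, |x n|

/-- `restr E x = Ex`, the restriction of `x` to the finite set `E`. -/
noncomputable def restr (E : Finset ℕ) (x : ℕ →₀ ℝ) : ℕ →₀ ℝ :=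
  x.filter (fun n => n ∈ E)

/-- `Admissible n Es` says that `E_1, …, E_n` are finite nonempty subsets of ℕ
with `n ≤ E_1 < E_2 < ⋯ < E_n`. -/
def Admissible (n : ℕ) (Es : Fin n → Finset ℕ) : Prop :=
  0 < n ∧ (∀ i, (Es i).Nonempty) ∧
    (∀ i : Fin n, ∀ a ∈ Es i, n ≤ a) ∧
    (∀ i j : Fin n, i < j → ∀ a ∈ Es i, ∀ b ∈ Es j, a < b)

/-- The Tsirelson iterate norms `‖·‖_k`. -/
noncomputable def tsir : ℕ → (ℕ →₀ ℝ) → ℝ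
  | 0, x => ⨆ n, |x n|
  | (k + 1), x => max (tsir k x)
      (sSup { r : ℝ | ∃ n : ℕ, ∃ Es : Fin n → Finset ℕ, Admissible n Es ∧
        r = (1 / 2) * ∑ i, tsir k (restr (Es i) x) })

/-!
Induction on `k`, carrying families of successive blocks `x₁ < ⋯ < xₙ`, supported beyond any
prescribed `s`, with `‖xᵢ‖_k = 1/2` and `‖∑ xᵢ‖_k ≤ 1`. Once the supports start beyond `n`,
the sets `Eᵢ = supp xᵢ` are admissible, so `‖∑ xᵢ‖_{k+1} ≥ n/4`. For `k = 0` take `xᵢ = e_{s+i}/2`.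

Summing such a family for large `n` and rescaling gives vectors `y`, as far out as we like, with
`‖y‖_{k+1} = 1/2` and `‖y‖_k` as small as we like. The blocks for `k + 1` are chosen one after
the other as such vectors `y_j` with `‖y_j‖_k ≤ 1/((n+1)(s_j+1))`, where `s_j` lies beyond the
supports of the earlier blocks. If `E₁ < ⋯ < E_m` is admissible and first meets the block `y_j`,
then `m ≤ max supp y_j`: it sees `y_j` with total weight at most `2‖y_j‖_{k+1} = 1` and every
later block `y_{j'}` with weight at most `m ‖y_{j'}‖_k ≤ 1/(n+1)`, whence `‖∑ y_j‖_{k+1} ≤ 1`.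
-/

open Function

section Restriction

variable (E F : Finset ℕ) (x y : ℕ →₀ ℝ)

lemma restr_apply (p : ℕ) : restr E x p = if p ∈ E then x p else 0 := rfl

lemma restr_add : restr E (x + y) = restr E x + restr E y := Finsupp.filter_add

lemma restr_smul (c : ℝ) : restr E (c • x) = c • restr E x := Finsupp.filter_smul

lemma restr_sum {ι : Type*} (s : Finset ι) (f : ι → ℕ →₀ ℝ) :
    restr E (∑ i ∈ s, f i) = ∑ i ∈ s, restr E (f i) :=
  Finsupp.filter_sum s f

lemma restr_comm : restr E (restr F x) = restr F (restr E x) := by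
  ext p
  simp only [restr_apply]
  split_ifs <;> rfl

end Restriction

def Successive {m : ℕ} (E : Fin m → Finset ℕ) : Prop :=
  ∀ i j, i < j → ∀ a ∈ E i, ∀ b ∈ E j, a < b

lemma Successive.pairwise_disjoint {m : ℕ} {E : Fin m → Finset ℕ} (h : Successive E) :
    Pairwise (Disjoint on E) := by
  intro i j hij
  rw [Function.onFun, Finset.disjoint_left]
  intro a hi hj
  rcases hij.lt_or_gt with hlt | hlt
  · exact (h i j hlt a hi a hj).false
  · exact (h j i hlt a hj a hi).false

lemma Admissible.successive {m : ℕ} {Es : Fin m → Finset ℕ} (h : Admissible m Es) :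
    Successive Es :=
  h.2.2.2

lemma restr_support_sum {n : ℕ} {x : Fin n → ℕ →₀ ℝ} (hx : Successive fun i => (x i).support)
    (j : Fin n) : restr (x j).support (∑ i, x i) = x j := by
  rw [restr_sum, Finset.sum_eq_single j]
  · exact (Finsupp.filter_eq_self_iff _ _).2 fun p hp => Finsupp.mem_support_iff.2 hp
  · intro i _ hij
    refine (Finsupp.filter_eq_zero_iff _ _).2 fun p hp => Finsupp.notMem_support_iff.1 ?_
    exact Finset.disjoint_right.1 (hx.pairwise_disjoint hij) hp
  · simp

section L1

lemma l1_nonneg (x : ℕ →₀ ℝ) : 0 ≤ l1 x :=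
  Finset.sum_nonneg fun _ _ => abs_nonneg _

lemma abs_apply_le_l1 (x : ℕ →₀ ℝ) (p : ℕ) : |x p| ≤ l1 x := by
  by_cases hp : p ∈ x.support
  · exact Finset.single_le_sum (f := fun p => |x p|) (fun _ _ => abs_nonneg _) hp
  · simpa [Finsupp.notMem_support_iff.1 hp] using l1_nonneg x

lemma l1_restr (E : Finset ℕ) (x : ℕ →₀ ℝ) :
    l1 (restr E x) = ∑ p ∈ x.support with p ∈ E, |x p| :=
  Finset.sum_congr rfl fun p hp => by rw [restr_apply, if_pos (Finset.mem_filter.1 hp).2]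

lemma sum_l1_restr_le {m : ℕ} {Es : Fin m → Finset ℕ} (hEs : Pairwise (Disjoint on Es))
    (x : ℕ →₀ ℝ) : ∑ i, l1 (restr (Es i) x) ≤ l1 x := by
  simp_rw [l1_restr]
  rw [← Finset.sum_biUnion]
  · exact Finset.sum_le_sum_of_subset_of_nonneg
      (Finset.biUnion_subset.2 fun _ _ => Finset.filter_subset _ _) fun _ _ _ => abs_nonneg _
  · intro i _ j _ hij
    refine Finset.disjoint_left.2 fun p hi hj => ?_
    exact Finset.disjoint_left.1 (hEs hij) (Finset.mem_filter.1 hi).2 (Finset.mem_filter.1 hj).2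

lemma half_sum_restr_le_l1 {f : (ℕ →₀ ℝ) → ℝ} (hf : ∀ y, f y ≤ l1 y) {m : ℕ}
    {Es : Fin m → Finset ℕ} (hEs : Pairwise (Disjoint on Es)) (x : ℕ →₀ ℝ) :
    1 / 2 * ∑ i, f (restr (Es i) x) ≤ l1 x := by
  have hsum : ∑ i, f (restr (Es i) x) ≤ l1 x :=
    (Finset.sum_le_sum fun i _ => hf _).trans (sum_l1_restr_le hEs x)
  linarith [l1_nonneg x]

end L1

section TsirNorm

lemma tsir_nonneg (k : ℕ) (x : ℕ →₀ ℝ) : 0 ≤ tsir k x := by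
  induction k with
  | zero => exact Real.iSup_nonneg fun _ => abs_nonneg _
  | succ k ih => exact ih.trans (le_max_left _ _)

lemma tsir_le_tsir_succ (k : ℕ) (x : ℕ →₀ ℝ) : tsir k x ≤ tsir (k + 1) x :=
  le_max_left _ _

lemma tsir_zero_le {x : ℕ →₀ ℝ} {c : ℝ} (h : ∀ p, |x p| ≤ c) (hc : 0 ≤ c) : tsir 0 x ≤ c :=
  Real.iSup_le h hc

lemma tsir_succ_le {k : ℕ} {x : ℕ →₀ ℝ} {c : ℝ} (h₀ : tsir k x ≤ c)
    (h : ∀ m (Es : Fin m → Finset ℕ), Admissible m Es →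
      1 / 2 * ∑ i, tsir k (restr (Es i) x) ≤ c) :
    tsir (k + 1) x ≤ c :=
  max_le h₀ <| Real.sSup_le (by rintro r ⟨m, Es, hEs, rfl⟩; exact h m Es hEs)
    ((tsir_nonneg k x).trans h₀)

lemma tsir_le_l1 (k : ℕ) (x : ℕ →₀ ℝ) : tsir k x ≤ l1 x := by
  induction k generalizing x with
  | zero => exact tsir_zero_le (abs_apply_le_l1 x) (l1_nonneg x)
  | succ k ih =>
    exact tsir_succ_le (ih x) fun m Es hEs =>
      half_sum_restr_le_l1 ih hEs.successive.pairwise_disjoint x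

lemma abs_le_tsir_zero (x : ℕ →₀ ℝ) (p : ℕ) : |x p| ≤ tsir 0 x :=
  le_ciSup (f := fun p => |x p|) ⟨l1 x, by rintro r ⟨p, rfl⟩; exact abs_apply_le_l1 x p⟩ p

lemma le_tsir_succ {k m : ℕ} {Es : Fin m → Finset ℕ} (hEs : Admissible m Es) (x : ℕ →₀ ℝ) :
    1 / 2 * ∑ i, tsir k (restr (Es i) x) ≤ tsir (k + 1) x := by
  refine le_trans ?_ (le_max_right (tsir k x) _)
  refine le_csSup ⟨l1 x, ?_⟩ ⟨m, Es, hEs, rfl⟩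
  rintro r ⟨m', Es', hEs', rfl⟩
  exact half_sum_restr_le_l1 (tsir_le_l1 k) hEs'.successive.pairwise_disjoint x

lemma tsir_zero_right (k : ℕ) : tsir k 0 = 0 :=
  le_antisymm (by simpa [l1] using tsir_le_l1 k 0) (tsir_nonneg k 0)

lemma tsir_restr_le (k : ℕ) (E : Finset ℕ) (x : ℕ →₀ ℝ) : tsir k (restr E x) ≤ tsir k x := by
  induction k generalizing E x with
  | zero =>
    refine tsir_zero_le (fun p => ?_) (tsir_nonneg 0 x)
    rw [restr_apply]
    split_ifs
    · exact abs_le_tsir_zero x p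
    · simpa using tsir_nonneg 0 x
  | succ k ih =>
    refine tsir_succ_le ((ih E x).trans (tsir_le_tsir_succ k x)) fun m Es hEs => ?_
    calc 1 / 2 * ∑ i, tsir k (restr (Es i) (restr E x))
        ≤ 1 / 2 * ∑ i, tsir k (restr (Es i) x) := by
          gcongr with i
          rw [restr_comm]
          exact ih _ _
      _ ≤ tsir (k + 1) x := le_tsir_succ hEs x

lemma tsir_add_le (k : ℕ) (x y : ℕ →₀ ℝ) : tsir k (x + y) ≤ tsir k x + tsir k y := by
  induction k generalizing x y with
  | zero =>
    refine tsir_zero_le (fun p => ?_) (add_nonneg (tsir_nonneg 0 x) (tsir_nonneg 0 y))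
    exact (abs_add_le _ _).trans (add_le_add (abs_le_tsir_zero x p) (abs_le_tsir_zero y p))
  | succ k ih =>
    refine tsir_succ_le ((ih x y).trans (add_le_add (tsir_le_tsir_succ k x)
      (tsir_le_tsir_succ k y))) fun m Es hEs => ?_
    calc 1 / 2 * ∑ i, tsir k (restr (Es i) (x + y))
        ≤ 1 / 2 * ∑ i, tsir k (restr (Es i) x) + 1 / 2 * ∑ i, tsir k (restr (Es i) y) := by
          rw [← mul_add, ← Finset.sum_add_distrib]
          gcongr with i
          rw [restr_add]
          exact ih _ _
      _ ≤ tsir (k + 1) x + tsir (k + 1) y := add_le_add (le_tsir_succ hEs x) (le_tsir_succ hEs y)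

lemma tsir_sum_le {ι : Type*} (k : ℕ) (s : Finset ι) (x : ι → ℕ →₀ ℝ) :
    tsir k (∑ i ∈ s, x i) ≤ ∑ i ∈ s, tsir k (x i) :=
  Finset.le_sum_of_subadditive (tsir k) (tsir_zero_right k).le (tsir_add_le k) s x

lemma tsir_smul_le (k : ℕ) {c : ℝ} (hc : 0 ≤ c) (x : ℕ →₀ ℝ) : tsir k (c • x) ≤ c * tsir k x := by
  induction k generalizing x with
  | zero =>
    refine tsir_zero_le (fun p => ?_) (mul_nonneg hc (tsir_nonneg 0 x))
    rw [Finsupp.smul_apply, smul_eq_mul, abs_mul, abs_of_nonneg hc]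
    exact mul_le_mul_of_nonneg_left (abs_le_tsir_zero x p) hc
  | succ k ih =>
    refine tsir_succ_le ((ih x).trans (mul_le_mul_of_nonneg_left (tsir_le_tsir_succ k x) hc))
      fun m Es hEs => ?_
    calc 1 / 2 * ∑ i, tsir k (restr (Es i) (c • x))
        ≤ 1 / 2 * ∑ i, c * tsir k (restr (Es i) x) := by
          gcongr with i
          rw [restr_smul]
          exact ih _
      _ = c * (1 / 2 * ∑ i, tsir k (restr (Es i) x)) := by
          rw [← Finset.mul_sum]
          ring
      _ ≤ c * tsir (k + 1) x := mul_le_mul_of_nonneg_left (le_tsir_succ hEs x) hc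

lemma tsir_smul (k : ℕ) {c : ℝ} (hc : 0 < c) (x : ℕ →₀ ℝ) : tsir k (c • x) = c * tsir k x := by
  refine le_antisymm (tsir_smul_le k hc.le x) ?_
  have h := tsir_smul_le k (inv_nonneg.2 hc.le) (c • x)
  rw [inv_smul_smul₀ hc.ne'] at h
  rwa [← le_inv_mul_iff₀ hc]

lemma ne_zero_of_tsir_eq_half {k : ℕ} {y : ℕ →₀ ℝ} (h : tsir k y = 1 / 2) : y ≠ 0 := by
  rintro rfl
  norm_num [tsir_zero_right] at h

lemma tsir_zero_single {c : ℝ} (hc : 0 ≤ c) (p : ℕ) : tsir 0 (Finsupp.single p c) = c := by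
  refine le_antisymm (tsir_zero_le (fun q => ?_) hc) ?_
  · rw [Finsupp.single_apply]
    split_ifs
    · exact (abs_of_nonneg hc).le
    · simpa using hc
  · simpa [abs_of_nonneg hc] using abs_le_tsir_zero (Finsupp.single p c) p

end TsirNorm

section Blocks

variable {n : ℕ} {x : Fin n → ℕ →₀ ℝ}

lemma tsir_zero_sum_le (hx : Successive fun i => (x i).support) {c : ℝ}
    (hc : ∀ i, tsir 0 (x i) ≤ c) (hc₀ : 0 ≤ c) : tsir 0 (∑ i, x i) ≤ c := by
  refine tsir_zero_le (fun p => ?_) hc₀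
  by_cases hp : ∃ j, p ∈ (x j).support
  · obtain ⟨j, hj⟩ := hp
    have hsum : (∑ i, x i) p = x j p :=
      calc (∑ i, x i) p = restr (x j).support (∑ i, x i) p := (if_pos hj).symm
        _ = x j p := by rw [restr_support_sum hx j]
    rw [hsum]
    exact (abs_le_tsir_zero _ _).trans (hc j)
  · push Not at hp
    rw [Finsupp.finsetSum_apply, Finset.sum_eq_zero fun i _ => Finsupp.notMem_support_iff.1 (hp i)]
    simpa using hc₀

lemma le_tsir_succ_sum (k : ℕ) (hx : Successive fun i => (x i).support)
    (hn : ∀ i, ∀ p ∈ (x i).support, n ≤ p) (hhalf : ∀ i, tsir k (x i) = 1 / 2) :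
    (n : ℝ) / 4 ≤ tsir (k + 1) (∑ i, x i) := by
  rcases Nat.eq_zero_or_pos n with rfl | hpos
  · simpa using tsir_nonneg (k + 1) 0
  have hEs : Admissible n fun i => (x i).support :=
    ⟨hpos, fun i => Finsupp.support_nonempty_iff.2 (ne_zero_of_tsir_eq_half (hhalf i)), hn, hx⟩
  have h := le_tsir_succ (k := k) hEs (∑ i, x i)
  simp only [restr_support_sum hx, hhalf, Finset.sum_const, Finset.card_univ, Fintype.card_fin,
    nsmul_eq_mul] at h
  linarith

end Blocks

lemma sum_le_add_mul_of_le_of_ne_zero {n : ℕ} (a : Fin n → ℝ) {A b : ℝ} (hA₀ : 0 ≤ A)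
    (hb : 0 ≤ b) (hA : ∀ j, a j ≤ A) (hlater : ∀ i j, i < j → a i ≠ 0 → a j ≤ b) :
    ∑ j, a j ≤ A + n * b := by
  induction n with
  | zero => simpa using hA₀
  | succ n ih =>
    rw [Fin.sum_univ_castSucc, Nat.cast_succ]
    by_cases h : ∃ i : Fin n, a i.castSucc ≠ 0
    · obtain ⟨i, hi⟩ := h
      have hlast := hlater _ _ (Fin.castSucc_lt_last i) hi
      have := ih (fun j => a j.castSucc) (fun j => hA _)
        (fun i j hij => hlater _ _ (Fin.castSucc_lt_castSucc_iff.2 hij))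
      linarith
    · push Not at h
      simp only [h, Finset.sum_const_zero, zero_add]
      linarith [hA (Fin.last n), (by positivity : (0 : ℝ) ≤ (n + 1) * b)]

lemma tsir_succ_sum_le_one {k n : ℕ} {x : Fin n → ℕ →₀ ℝ} {ε : ℝ} (hε₀ : 0 ≤ ε)
    (hε : n * ε ≤ 1) (hhalf : ∀ j, tsir (k + 1) (x j) ≤ 1 / 2) (hsmall : ∀ j, tsir k (x j) ≤ ε)
    (hspread : ∀ i j, i < j → ∀ p ∈ (x i).support, p * tsir k (x j) ≤ ε) :
    tsir (k + 1) (∑ j, x j) ≤ 1 := by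
  refine tsir_succ_le ?_ fun m Es hEs => ?_
  · calc tsir k (∑ j, x j) ≤ ∑ j, tsir k (x j) := tsir_sum_le k _ _
      _ ≤ ∑ _j : Fin n, ε := Finset.sum_le_sum fun j _ => hsmall j
      _ ≤ 1 := by simpa using hε
  set T : Fin n → ℝ := fun j => ∑ i, tsir k (restr (Es i) (x j))
  have hT : ∀ j, T j ≤ 1 := fun j => by linarith [le_tsir_succ (k := k) hEs (x j), hhalf j]
  have hTε : ∀ i j, i < j → T i ≠ 0 → T j ≤ ε := by
    intro i j hij hi
    obtain ⟨l, -, hl⟩ := Finset.exists_ne_zero_of_sum_ne_zero hi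
    obtain ⟨p, hp⟩ : (restr (Es l) (x i)).support.Nonempty :=
      Finsupp.support_nonempty_iff.2 fun h => hl (by rw [h, tsir_zero_right])
    obtain ⟨hpx, hpE⟩ := Finset.mem_filter.1 hp
    have hmp : (m : ℝ) ≤ p := by exact_mod_cast hEs.2.2.1 l p hpE
    calc T j ≤ ∑ _i : Fin m, tsir k (x j) := Finset.sum_le_sum fun _ _ => tsir_restr_le k _ _
      _ = m * tsir k (x j) := by simp
      _ ≤ p * tsir k (x j) := mul_le_mul_of_nonneg_right hmp (tsir_nonneg k _)
      _ ≤ ε := hspread i j hij p hpx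
  calc 1 / 2 * ∑ i, tsir k (restr (Es i) (∑ j, x j)) ≤ 1 / 2 * ∑ j, T j := by
        gcongr
        rw [Finset.sum_comm]
        refine Finset.sum_le_sum fun i _ => ?_
        rw [restr_sum]
        exact tsir_sum_le k _ _
    _ ≤ 1 / 2 * (1 + n * ε) := by
        gcongr
        exact sum_le_add_mul_of_le_of_ne_zero T zero_le_one hε₀ hT hTε
    _ ≤ 1 := by linarith

structure IsHalfBlocks (k s : ℕ) {n : ℕ} (x : Fin n → ℕ →₀ ℝ) : Prop where
  successive : Successive fun i => (x i).support
  le_of_mem_support : ∀ i, ∀ p ∈ (x i).support, s ≤ p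
  tsir_eq_half : ∀ i, tsir k (x i) = 1 / 2
  tsir_sum_le_one : tsir k (∑ i, x i) ≤ 1

lemma exists_isHalfBlocks_zero (n s : ℕ) :
    ∃ x : Fin n → ℕ →₀ ℝ, IsHalfBlocks 0 s x := by
  have hsupp (i : Fin n) : (Finsupp.single (s + i) (1 / 2 : ℝ)).support = {s + (i : ℕ)} :=
    Finsupp.support_single _ (by norm_num)
  have hx : Successive fun i : Fin n => (Finsupp.single (s + i) (1 / 2 : ℝ)).support := by
    intro i j hij a ha b hb
    simp only [hsupp, Finset.mem_singleton] at ha hb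
    rw [ha, hb]
    exact Nat.add_lt_add_left hij s
  refine ⟨fun i => Finsupp.single (s + i) (1 / 2), hx, fun i p hp => ?_,
    fun i => tsir_zero_single (by norm_num) _, ?_⟩
  · rw [hsupp, Finset.mem_singleton] at hp
    omega
  · exact tsir_zero_sum_le hx (fun i => by rw [tsir_zero_single (by norm_num)]; norm_num) zero_le_one

lemma exists_tsir_succ_eq_half_tsir_le {k : ℕ}
    (hk : ∀ n s, ∃ x : Fin n → ℕ →₀ ℝ, IsHalfBlocks k s x) {ε : ℝ} (hε : 0 < ε) (s : ℕ) :
    ∃ y : ℕ →₀ ℝ, (∀ p ∈ y.support, s ≤ p) ∧ tsir (k + 1) y = 1 / 2 ∧ tsir k y ≤ ε := by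
  set n := ⌈2 / ε⌉₊
  obtain ⟨x, hx⟩ := hk n (max n s)
  set z := ∑ i, x i
  have hz : 1 / (2 * ε) ≤ tsir (k + 1) z := by
    have hn : 2 / ε ≤ n := Nat.le_ceil _
    have := le_tsir_succ_sum k hx.successive
      (fun i p hp => (le_max_left _ _).trans (hx.le_of_mem_support i p hp)) hx.tsir_eq_half
    calc 1 / (2 * ε) = 2 / ε / 4 := by field_simp; norm_num
      _ ≤ n / 4 := by gcongr
      _ ≤ tsir (k + 1) z := this
  have hpos : 0 < tsir (k + 1) z := lt_of_lt_of_le (by positivity) hz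
  refine ⟨(2 * tsir (k + 1) z)⁻¹ • z, fun p hp => ?_, ?_, ?_⟩
  · obtain ⟨i, -, hi⟩ := Finsupp.mem_support_finsetSum p (Finsupp.support_smul hp)
    exact (le_max_right _ _).trans (hx.le_of_mem_support i p hi)
  · rw [tsir_smul _ (by positivity)]
    field_simp
  · rw [tsir_smul _ (by positivity)]
    calc (2 * tsir (k + 1) z)⁻¹ * tsir k z ≤ (2 * tsir (k + 1) z)⁻¹ * 1 := by
          gcongr
          exact hx.tsir_sum_le_one
      _ ≤ ε := by
          rw [mul_one, inv_le_iff_one_le_mul₀' (by positivity)]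
          rw [div_le_iff₀ (by positivity)] at hz
          linarith

lemma exists_isHalfBlocks_succ {k : ℕ}
    (hk : ∀ ε > 0, ∀ s, ∃ y : ℕ →₀ ℝ, (∀ p ∈ y.support, s ≤ p) ∧ tsir (k + 1) y = 1 / 2 ∧
      tsir k y ≤ ε) (n s : ℕ) :
    ∃ x : Fin n → ℕ →₀ ℝ, IsHalfBlocks (k + 1) s x := by
  choose Y hYs hYhalf hYsmall using fun t : ℕ => hk (1 / ((n + 1) * (t + 1))) (by positivity) t
  obtain ⟨st, hst₀, hst⟩ : ∃ st : ℕ → ℕ, st 0 = s ∧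
      ∀ j, st (j + 1) = max (st j) ((Y (st j)).support.sup id) + 1 :=
    ⟨fun j => Nat.rec s (fun _ t => max t ((Y t).support.sup id) + 1) j, rfl, fun _ => rfl⟩
  have hmono : Monotone st := monotone_nat_of_le_succ fun j => by rw [hst]; omega
  have hlt (j : ℕ) : ∀ p ∈ (Y (st j)).support, p < st (j + 1) := fun p hp => by
    have : p ≤ (Y (st j)).support.sup id := Finset.le_sup (f := id) hp
    rw [hst]
    omega
  have hweight (j : ℕ) : ((st j : ℝ) + 1) * tsir k (Y (st j)) ≤ 1 / (n + 1) := by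
    have := hYsmall (st j)
    rw [one_div, mul_inv, ← div_eq_mul_inv, le_div_iff₀ (by positivity)] at this
    rw [one_div]
    linarith
  refine ⟨fun i => Y (st i), fun i j hij p hp q hq => ?_, fun i p hp => ?_, fun i => hYhalf _, ?_⟩
  · exact (hlt i p hp).trans_le ((hmono (Nat.succ_le_of_lt hij)).trans (hYs _ q hq))
  · exact hst₀ ▸ (hmono (Nat.zero_le i)).trans (hYs _ p hp)
  refine tsir_succ_sum_le_one (ε := 1 / (n + 1)) (by positivity) ?_ (fun j => (hYhalf _).le)
    (fun j => ?_) (fun i j hij p hp => ?_)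
  · rw [mul_one_div, div_le_one (by positivity)]
    linarith
  · refine le_trans ?_ (hweight j)
    exact le_mul_of_one_le_left (tsir_nonneg _ _) (le_add_of_nonneg_left (Nat.cast_nonneg _))
  · refine le_trans ?_ (hweight j)
    have : p < st j := (hlt i p hp).trans_le (hmono (Nat.succ_le_of_lt hij))
    gcongr
    · exact tsir_nonneg _ _
    · exact_mod_cast this.le.trans (Nat.le_succ _)

lemma exists_isHalfBlocks (k n s : ℕ) : ∃ x : Fin n → ℕ →₀ ℝ, IsHalfBlocks k s x := by
  induction k generalizing n s with
  | zero => exact exists_isHalfBlocks_zero n s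
  | succ k ih =>
    exact exists_isHalfBlocks_succ (fun _ hε s => exists_tsir_succ_eq_half_tsir_le ih hε s) n s

theorem tsir_iterate_gap_general (k n : ℕ) :
    ∃ x : Fin n → (ℕ →₀ ℝ),
      (∀ i, tsir k (x i) = 1 / 2) ∧
      tsir k (∑ i, x i) ≤ 1 ∧
      (n : ℝ) / 4 ≤ tsir (k + 1) (∑ i, x i) := by
  obtain ⟨x, hx⟩ := exists_isHalfBlocks k n n
  exact ⟨x, hx.tsir_eq_half, hx.tsir_sum_le_one,
    le_tsir_succ_sum k hx.successive hx.le_of_mem_support hx.tsir_eq_half⟩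

/-- for every `k ∈ ℕ` and `n ≥ 1` there are `x_1, …, x_n ∈ c00` with
`‖x_i‖_k = 1/2` for all `i`, `‖Σ x_i‖_k ≤ 1` and `‖Σ x_i‖_{k+1} ≥ n/4`. -/
theorem tsir_iterate_gap (k n : ℕ) (hn : 1 ≤ n) :
    ∃ x : Fin n → (ℕ →₀ ℝ),
      (∀ i, tsir k (x i) = 1 / 2) ∧
      tsir k (∑ i, x i) ≤ 1 ∧
      (n : ℝ) / 4 ≤ tsir (k + 1) (∑ i, x i) :=
  tsir_iterate_gap_general k n
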